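/- Let I = (G, T, R, k, l) be an MMCU instance and let u, v ∈ T be two distinct terminals with (u, v) ∈ R such that uv ∈ E(G) or |N_G(u) ∩ N_G(v)| > k + l. Let I' be the instance obtained from I by identifying the terminals u and v. Then the set of minimal solutions of I and the set of minimal solutions of I' coincide (under the natural correspondence between the edges of G not joining u and v and the edges of the identified graph). -/

import Mathlib

/-- A multigraph on vertex type `V` with edge type `E`: each edge has an
unordered pair of endpoints. -/
structure Multigraph (V : Type*) (E : Type*) where
  ends : E → Sym2 V

namespace Multigraph

variable {V E : Type*}

/-- The multigraph has no self-loops. -/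
def Loopless (G : Multigraph V E) : Prop := ∀ e : E, ¬ (G.ends e).IsDiag

/-- Two vertices are adjacent if some edge joins them. -/
def Adj (G : Multigraph V E) (a b : V) : Prop := ∃ e : E, G.ends e = s(a, b)

/-- The (open) neighbourhood of a vertex. -/
def nbhd (G : Multigraph V E) (v : V) : Set V := {u | G.Adj v u}

/-- The neighbourhood `N_G(D)` of a set of vertices. -/
def setNbhd (G : Multigraph V E) (D : Set V) : Set V :=
  {u | u ∉ D ∧ ∃ d ∈ D, G.Adj u d}

/-- One step along an edge of `G − (X, F)`. -/
def Step (G : Multigraph V E) (X : Set V) (F : Set E) (a b : V) : Prop :=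
  a ∉ X ∧ b ∉ X ∧ ∃ e : E, e ∉ F ∧ G.ends e = s(a, b)

/-- `u` and `v` lie in the same connected component of `G − (X, F)`. -/
def Conn (G : Multigraph V E) (X : Set V) (F : Set E) (u v : V) : Prop :=
  u ∉ X ∧ v ∉ X ∧ Relation.ReflTransGen (G.Step X F) u v

end Multigraph

/-- `R` is an equivalence relation on the set `T` (and vanishes outside `T`). -/
def IsEquivOn {V : Type*} (T : Set V) (R : V → V → Prop) : Prop :=
  (∀ u v, R u v → u ∈ T ∧ v ∈ T) ∧ (∀ u ∈ T, R u u) ∧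
    (∀ u v, R u v → R v u) ∧ (∀ u v w, R u v → R v w → R u w)

/-- `(X, F)` is a solution to the MMCU instance `(G, T, R, k, l)`. -/
def IsSolution {V E : Type*} (G : Multigraph V E) (T : Set V) (R : V → V → Prop)
    (k l : ℕ) (X : Set V) (F : Set E) : Prop :=
  X ⊆ Tᶜ ∧ X.ncard ≤ k ∧ F.ncard ≤ l ∧
    ∀ u ∈ T, ∀ v ∈ T, (G.Conn X F u v ↔ R u v)

/-- `(X, F)` is a minimal solution to the MMCU instance `(G, T, R, k, l)`. -/
def IsMinSolution {V E : Type*} (G : Multigraph V E) (T : Set V) (R : V → V → Prop)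
    (k l : ℕ) (X : Set V) (F : Set E) : Prop :=
  IsSolution G T R k l X F ∧
    ∀ X' F', IsSolution G T R k l X' F' → X' ⊆ X → F' ⊆ F → X' = X ∧ F' = F

/-- The graph obtained from `G` by identifying the vertices `u` and `v` (the merged
vertex is represented by `u`): edges joining `u` and `v` are discarded, and every other
edge has each endpoint equal to `v` replaced by `u`. -/
def Multigraph.identify {V E : Type*} [DecidableEq V] (G : Multigraph V E) (u v : V) :
    Multigraph V {e : E // G.ends e ≠ s(u, v)} where
  ends := fun e => (G.ends e.1).map (fun x => if x = v then u else x)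

/-
In both instances, a solution `(X, F)` deleting no edge that joins `u` and `v` leaves `u` and `v`
connected. In `I` this is forced by `(u, v) ∈ R`; in `I'` it comes from the hypothesis: either an
edge `uv` survives, or among more than `k + l` common neighbours `w` at most `k` are deleted and
each deleted edge cuts at most one path `u - w - v`. Once `u` and `v` are connected, the components
of `G - (X, F)` are the preimages under the merging map of those of the identified graph, so
solutions avoiding `v` correspond. Minimal solutions do avoid `v` and the edges `uv`: deleting an
edge `uv` is redundant when `u` and `v` must stay connected anyway, and `v` is isolated in the
identified graph.
-/

theorem Sym2.eq_of_eq_mk_or_eq_mk {V : Type*} {z : Sym2 V} {u v w w' : V} (hz : z ≠ s(u, v))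
    (hw : z = s(u, w) ∨ z = s(v, w)) (hw' : z = s(u, w') ∨ z = s(v, w')) : w = w' := by
  rcases hw with rfl | rfl <;> rcases hw' with h | h <;> simp only [Sym2.eq_iff] at hz h <;> grind

namespace Multigraph

variable {V E : Type*} {G : Multigraph V E} {X : Set V} {F : Set E} {a b u v : V}

theorem Step.symm (h : G.Step X F a b) : G.Step X F b a := by
  obtain ⟨ha, hb, e, heF, he⟩ := h
  exact ⟨hb, ha, e, heF, he.trans Sym2.eq_swap⟩

instance : Std.Symm (G.Step X F) := ⟨fun _ _ => Step.symm⟩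

theorem Step.anti {F₂ : Set E} (hF : F₂ ⊆ F) (h : G.Step X F a b) : G.Step X F₂ a b := by
  obtain ⟨ha, hb, e, heF, he⟩ := h
  exact ⟨ha, hb, e, fun h => heF (hF h), he⟩

theorem Conn.symm (h : G.Conn X F a b) : G.Conn X F b a :=
  ⟨h.2.1, h.1, Std.Symm.symm _ _ h.2.2⟩

theorem conn_of_ncard_lt [Finite V] [Finite E] (huX : u ∉ X) (hvX : v ∉ X)
    (hF : ∀ e ∈ F, G.ends e ≠ s(u, v))
    (hlt : X.ncard + F.ncard < (G.nbhd u ∩ G.nbhd v).ncard) : G.Conn X F u v := by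
  set B : Set V := {w | ∃ e ∈ F, G.ends e = s(u, w) ∨ G.ends e = s(v, w)}
  have hB : B.ncard ≤ F.ncard := by
    have : Nonempty V := ⟨u⟩
    -- the far end of an edge from `u` or `v`, unique because the edge does not join `u` and `v`
    let other : E → V := fun e =>
      Classical.epsilon fun w => G.ends e = s(u, w) ∨ G.ends e = s(v, w)
    calc B.ncard ≤ (other '' F).ncard := Set.ncard_le_ncard ?_
      _ ≤ F.ncard := Set.ncard_image_le
    rintro w ⟨e, heF, hw⟩
    have hother := Classical.epsilon_spec
      (p := fun w => G.ends e = s(u, w) ∨ G.ends e = s(v, w)) ⟨w, hw⟩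
    exact ⟨e, heF, Sym2.eq_of_eq_mk_or_eq_mk (hF e heF) hother hw⟩
  obtain ⟨w, ⟨⟨eu, heu⟩, ⟨ev, hev⟩⟩, hwX, hwB⟩ :
      ∃ w ∈ G.nbhd u ∩ G.nbhd v, w ∉ X ∧ w ∉ B := by
    by_contra! hcon
    have hsub : G.nbhd u ∩ G.nbhd v ⊆ X ∪ B := fun w hw =>
      (em (w ∈ X)).elim Or.inl fun hwX => Or.inr (hcon w hw hwX)
    have := (Set.ncard_le_ncard hsub).trans (Set.ncard_union_le X B)
    omega
  exact ⟨huX, hvX, .tail (.single ⟨huX, hwX, eu, fun h => hwB ⟨eu, h, .inl heu⟩, heu⟩)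
    ⟨hwX, hvX, ev, fun h => hwB ⟨ev, h, .inr hev⟩, hev.trans Sym2.eq_swap⟩⟩

theorem conn_of_adj_or_ncard_lt [Finite V] [Finite E] {k l : ℕ}
    (hcond : (∃ e : E, G.ends e = s(u, v)) ∨ k + l < (G.nbhd u ∩ G.nbhd v).ncard)
    (huX : u ∉ X) (hvX : v ∉ X) (hk : X.ncard ≤ k) (hl : F.ncard ≤ l)
    (hF : ∀ e ∈ F, G.ends e ≠ s(u, v)) : G.Conn X F u v := by
  rcases hcond with ⟨e, he⟩ | hlt
  · exact ⟨huX, hvX, .single ⟨huX, hvX, e, fun heF => hF e heF he, he⟩⟩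
  · exact conn_of_ncard_lt huX hvX hF (by omega)

theorem conn_sdiff_singleton_iff {e : E} (he : G.ends e = s(u, v)) (hC : G.Conn X F u v) :
    G.Conn X (F \ {e}) a b ↔ G.Conn X F a b := by
  refine and_congr_right' (and_congr_right' ⟨fun h => ?_, fun h => ?_⟩)
  · refine Relation.reflTransGen_closed (fun p q hpq => ?_) _ _ h
    obtain ⟨hp, hq, e', he'F, he'⟩ := hpq
    by_cases he'F' : e' ∈ F
    · obtain rfl : e' = e := by simpa [he'F'] using he'F
      rcases Sym2.eq_iff.1 (he.symm.trans he') with ⟨rfl, rfl⟩ | ⟨rfl, rfl⟩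
      · exact hC.2.2
      · exact hC.symm.2.2
    · exact .single ⟨hp, hq, e', he'F', he'⟩
  · exact Relation.ReflTransGen.mono (fun p q => Step.anti Set.sdiff_subset) _ _ h

theorem conn_sdiff_singleton_iff_of_isolated (hv : ∀ e, v ∉ G.ends e) (ha : a ≠ v)
    (hb : b ≠ v) :
    G.Conn (X \ {v}) F a b ↔ G.Conn X F a b := by
  have hstep : G.Step (X \ {v}) F = G.Step X F := by
    ext p q
    refine ⟨fun ⟨hp, hq, e, heF, he⟩ => ?_, fun ⟨hp, hq, e, heF, he⟩ => ?_⟩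
    · have hpv : p ≠ v := fun h => hv e (h ▸ he ▸ Sym2.mem_mk_left p q)
      have hqv : q ≠ v := fun h => hv e (h ▸ he ▸ Sym2.mem_mk_right p q)
      exact ⟨fun h => hp ⟨h, hpv⟩, fun h => hq ⟨h, hqv⟩, e, heF, he⟩
    · exact ⟨fun h => hp h.1, fun h => hq h.1, e, heF, he⟩
  simp [Conn, hstep, ha, hb]

section Merge

variable [DecidableEq V] {x : V}

def merge (u v x : V) : V := if x = v then u else x

theorem merge_of_ne (h : x ≠ v) : merge u v x = x := if_neg h

theorem merge_ne (huv : u ≠ v) (x : V) : merge u v x ≠ v := by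
  unfold merge; split_ifs <;> assumption

theorem merge_notMem (huX : u ∉ X) (hx : x ∉ X) : merge u v x ∉ X := by
  unfold merge; split_ifs <;> assumption

theorem notMem_of_merge_notMem (hvX : v ∉ X) (h : merge u v x ∉ X) : x ∉ X := by
  unfold merge at h; split_ifs at h with hx
  exacts [hx ▸ hvX, h]

theorem merge_eq_merge_of_mk_eq (h : s(a, b) = s(u, v)) : merge u v a = merge u v b := by
  rcases Sym2.eq_iff.1 h with ⟨rfl, rfl⟩ | ⟨rfl, rfl⟩ <;> simp [merge]

theorem image_merge {T : Set V} (hu : u ∈ T) (huv : u ≠ v) : merge u v '' T = T \ {v} := by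
  ext x
  constructor
  · rintro ⟨y, hy, rfl⟩
    refine ⟨?_, merge_ne huv y⟩
    unfold merge; split_ifs <;> assumption
  · rintro ⟨hx, hxv⟩
    exact ⟨x, hx, merge_of_ne hxv⟩

theorem identify_ends (e : {e : E // G.ends e ≠ s(u, v)}) :
    (G.identify u v).ends e = (G.ends e).map (merge u v) := rfl

theorem notMem_identify_ends (huv : u ≠ v) (e : {e : E // G.ends e ≠ s(u, v)}) :
    v ∉ (G.identify u v).ends e := by
  rw [identify_ends, Sym2.mem_map]
  rintro ⟨x, -, hx⟩
  exact merge_ne huv x hx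

theorem reflTransGen_merge (hC : G.Conn X F u v) (x : V) :
    Relation.ReflTransGen (G.Step X F) x (merge u v x) := by
  unfold merge; split_ifs with hxv
  · exact hxv ▸ hC.symm.2.2
  · rfl

variable {F' : Set {e : E // G.ends e ≠ s(u, v)}}

theorem Step.identify (huX : u ∉ X) (h : G.Step X (Subtype.val '' F') a b) :
    Relation.ReflTransGen ((G.identify u v).Step X F') (merge u v a) (merge u v b) := by
  obtain ⟨ha, hb, e, heF, he⟩ := h
  by_cases huv : G.ends e = s(u, v)
  · rw [merge_eq_merge_of_mk_eq (he.symm.trans huv)]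
  · refine .single ⟨merge_notMem huX ha, merge_notMem huX hb, ⟨e, huv⟩,
      fun h => heF ⟨_, h, rfl⟩, ?_⟩
    rw [identify_ends, he, Sym2.map_mk]

theorem Step.of_identify (hC : G.Conn X (Subtype.val '' F') u v)
    (h : (G.identify u v).Step X F' a b) :
    Relation.ReflTransGen (G.Step X (Subtype.val '' F')) a b := by
  obtain ⟨ha, hb, ⟨e, hne⟩, heF, he⟩ := h
  obtain ⟨p, q, hpq⟩ : ∃ p q, G.ends e = s(p, q) := Sym2.exists.1 ⟨_, rfl⟩
  rw [identify_ends, hpq, Sym2.map_mk] at he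
  have hmerge (hp : p ∉ X) (hq : q ∉ X) :
      Relation.ReflTransGen (G.Step X (Subtype.val '' F')) (merge u v p) (merge u v q) :=
    (Std.Symm.symm _ _ (reflTransGen_merge hC p)).trans
      (.head ⟨hp, hq, e, fun ⟨e', he'F, he'⟩ => heF (by subst he'; exact he'F), hpq⟩
        (reflTransGen_merge hC q))
  have hp := notMem_of_merge_notMem (u := u) (x := p) hC.2.1
  have hq := notMem_of_merge_notMem (u := u) (x := q) hC.2.1
  rcases Sym2.eq_iff.1 he with ⟨rfl, rfl⟩ | ⟨rfl, rfl⟩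
  · exact hmerge (hp ha) (hq hb)
  · exact Std.Symm.symm _ _ (hmerge (hp hb) (hq ha))

theorem identify_conn_merge_iff (hC : G.Conn X (Subtype.val '' F') u v) (ha : a ∉ X)
    (hb : b ∉ X) :
    (G.identify u v).Conn X F' (merge u v a) (merge u v b) ↔
      G.Conn X (Subtype.val '' F') a b := by
  refine ⟨fun h => ⟨ha, hb, ?_⟩,
    fun h => ⟨merge_notMem hC.1 ha, merge_notMem hC.1 hb, ?_⟩⟩
  · exact (reflTransGen_merge hC a).trans
      ((Relation.reflTransGen_closed (fun _ _ => Step.of_identify hC) _ _ h.2.2).trans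
        (Std.Symm.symm _ _ (reflTransGen_merge hC b)))
  · exact Relation.ReflTransGen.lift' (merge u v) (fun _ _ => Step.identify hC.1) _ _ h.2.2

end Merge

end Multigraph

section Solutions

open Multigraph

variable {V E : Type*} {G : Multigraph V E} {T : Set V} {R : V → V → Prop} {k l : ℕ}
  {X : Set V} {F : Set E} {u v : V}

theorem IsSolution.sdiff_singleton_edge {e : E} (h : IsSolution G T R k l X F)
    (he : G.ends e = s(u, v)) (hu : u ∈ T) (hv : v ∈ T) (hRuv : R u v) :
    IsSolution G T R k l X (F \ {e}) := by
  obtain ⟨hXT, hk, hl, hconn⟩ := h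
  refine ⟨hXT, hk, (Set.ncard_sdiff_singleton_le F e).trans hl, fun a ha b hb => ?_⟩
  rw [conn_sdiff_singleton_iff he ((hconn u hu v hv).2 hRuv), hconn a ha b hb]

theorem IsMinSolution.ends_ne {e : E} (h : IsMinSolution G T R k l X F) (hu : u ∈ T)
    (hv : v ∈ T) (hRuv : R u v) (heF : e ∈ F) : G.ends e ≠ s(u, v) := by
  intro he
  have hF := (h.2 X _ (h.1.sdiff_singleton_edge he hu hv hRuv) subset_rfl Set.sdiff_subset).2
  exact (hF.symm ▸ heF).2 rfl

theorem IsSolution.sdiff_singleton_isolated (h : IsSolution G T R k l X F)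
    (hv : ∀ e, v ∉ G.ends e) (hvT : v ∉ T) : IsSolution G T R k l (X \ {v}) F := by
  obtain ⟨hXT, hk, hl, hconn⟩ := h
  refine ⟨Set.sdiff_subset.trans hXT, (Set.ncard_sdiff_singleton_le X v).trans hk, hl,
    fun a ha b hb => ?_⟩
  rw [conn_sdiff_singleton_iff_of_isolated hv (ne_of_mem_of_not_mem ha hvT)
    (ne_of_mem_of_not_mem hb hvT), hconn a ha b hb]

theorem IsMinSolution.notMem_of_isolated (h : IsMinSolution G T R k l X F)
    (hv : ∀ e, v ∉ G.ends e) (hvT : v ∉ T) : v ∉ X := by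
  intro hvX
  have hX := (h.2 _ F (h.1.sdiff_singleton_isolated hv hvT) Set.sdiff_subset subset_rfl).1
  exact (hX.symm ▸ hvX).2 rfl

theorem isMinSolution_iff_of_isSolution_iff {E' : Type*} {G' : Multigraph V E'} {T' : Set V}
    {R' : V → V → Prop} {f : E' → E} (hf : Function.Injective f) {F' : Set E'}
    (h : ∀ X₂ ⊆ X, ∀ F₂,
      IsSolution G' T' R' k l X₂ F₂ ↔ IsSolution G T R k l X₂ (f '' F₂)) :
    IsMinSolution G' T' R' k l X F' ↔ IsMinSolution G T R k l X (f '' F') := by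
  rw [IsMinSolution, IsMinSolution, h X subset_rfl]
  refine and_congr_right fun _ =>
    ⟨fun hmin X₂ F₂ hsol hX hF => ?_, fun hmin X₂ F₂ hsol hX hF => ?_⟩
  · obtain ⟨F₃, hF₃, rfl⟩ := Set.subset_image_iff.1 hF
    obtain ⟨rfl, rfl⟩ := hmin X₂ F₃ ((h X₂ hX F₃).2 hsol) hX hF₃
    exact ⟨rfl, rfl⟩
  · obtain ⟨rfl, hF₂⟩ :=
      hmin X₂ (f '' F₂) ((h X₂ hX F₂).1 hsol) hX (Set.image_mono hF)
    exact ⟨rfl, hf.image_injective hF₂⟩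

end Solutions

section Identify

open Multigraph

variable {V E : Type*} [DecidableEq V] {G : Multigraph V E} {T : Set V} {R : V → V → Prop}
  {k l : ℕ} {X : Set V} {u v : V} {F' : Set {e : E // G.ends e ≠ s(u, v)}}

theorem IsEquivOn.rel_merge_iff (hR : IsEquivOn T R) (hRuv : R u v) {a b : V} (ha : a ∈ T)
    (hb : b ∈ T) : R (merge u v a) (merge u v b) ↔ R a b := by
  obtain ⟨-, hrefl, hsymm, htrans⟩ := hR
  have hmerge (x : V) (hx : x ∈ T) : R x (merge u v x) := by
    unfold merge; split_ifs with hxv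
    exacts [hxv ▸ hsymm _ _ hRuv, hrefl x hx]
  exact ⟨fun h => htrans _ _ _ (hmerge a ha) (htrans _ _ _ h (hsymm _ _ (hmerge b hb))),
    fun h => htrans _ _ _ (hsymm _ _ (hmerge a ha)) (htrans _ _ _ h (hmerge b hb))⟩

theorem isSolution_identify_iff (hR : IsEquivOn T R) (huv : u ≠ v) (hu : u ∈ T)
    (hRuv : R u v) (hvX : v ∉ X) (hC : G.Conn X (Subtype.val '' F') u v) :
    IsSolution (G.identify u v) (T \ {v}) (fun a b => a ≠ v ∧ b ≠ v ∧ R a b) k l X F' ↔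
      IsSolution G T R k l X (Subtype.val '' F') := by
  have hXT : X ⊆ (T \ {v})ᶜ ↔ X ⊆ Tᶜ :=
    ⟨fun h x hx hxT => h hx ⟨hxT, ne_of_mem_of_not_mem hx hvX⟩,
      fun h x hx hxT => h hx hxT.1⟩
  rw [IsSolution, IsSolution, hXT, Set.ncard_image_of_injective _ Subtype.val_injective,
    ← image_merge hu huv]
  simp only [Set.forall_mem_image, ne_eq, merge_ne huv, not_false_eq_true, true_and]
  refine and_congr_right fun hXT => and_congr_right' <| and_congr_right' <|
    forall₂_congr fun a ha => forall₂_congr fun b hb => ?_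
  rw [identify_conn_merge_iff hC (fun h => hXT h ha) (fun h => hXT h hb),
    hR.rel_merge_iff hRuv ha hb]

theorem isSolution_identify_iff_of_adj_or_ncard_lt [Finite V] [Finite E] (hR : IsEquivOn T R)
    (huv : u ≠ v) (hu : u ∈ T) (hv : v ∈ T) (hRuv : R u v)
    (hcond : (∃ e : E, G.ends e = s(u, v)) ∨ k + l < (G.nbhd u ∩ G.nbhd v).ncard)
    (hvX : v ∉ X) :
    IsSolution (G.identify u v) (T \ {v}) (fun a b => a ≠ v ∧ b ≠ v ∧ R a b) k l X F' ↔
      IsSolution G T R k l X (Subtype.val '' F') := by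
  by_cases hC : G.Conn X (Subtype.val '' F') u v
  · exact isSolution_identify_iff hR huv hu hRuv hvX hC
  refine ⟨fun ⟨hXT, hk, hl, _⟩ => absurd ?_ hC,
    fun h => absurd ((h.2.2.2 u hu v hv).2 hRuv) hC⟩
  refine conn_of_adj_or_ncard_lt hcond (fun h => hXT h ⟨hu, huv⟩) hvX hk ?_ ?_
  · rwa [Set.ncard_image_of_injective _ Subtype.val_injective]
  · rintro _ ⟨e, -, rfl⟩
    exact e.2

end Identify

theorem stmt7_general {V E : Type*} [Fintype V] [Fintype E] [DecidableEq V]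
    (G : Multigraph V E)
    (T : Set V) (R : V → V → Prop) (hR : IsEquivOn T R) (k l : ℕ)
    (u v : V) (huv : u ≠ v) (hu : u ∈ T) (hv : v ∈ T) (hRuv : R u v)
    (hcond : (∃ e : E, G.ends e = s(u, v)) ∨ k + l < (G.nbhd u ∩ G.nbhd v).ncard) :
    (∀ (X : Set V) (F : Set E), IsMinSolution G T R k l X F →
      ∀ e ∈ F, G.ends e ≠ s(u, v)) ∧
    (∀ (X : Set V) (F' : Set {e : E // G.ends e ≠ s(u, v)}),
      IsMinSolution (G.identify u v) (T \ {v})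
          (fun a b => a ≠ v ∧ b ≠ v ∧ R a b) k l X F' ↔
        IsMinSolution G T R k l X (Subtype.val '' F')) := by
  refine ⟨fun X F h e heF => h.ends_ne hu hv hRuv heF, fun X F' => ?_⟩
  have hmin (hvX : v ∉ X) :
      IsMinSolution (G.identify u v) (T \ {v}) (fun a b => a ≠ v ∧ b ≠ v ∧ R a b)
          k l X F' ↔ IsMinSolution G T R k l X (Subtype.val '' F') :=
    isMinSolution_iff_of_isSolution_iff Subtype.val_injective fun X₂ hX₂ _ =>
      isSolution_identify_iff_of_adj_or_ncard_lt hR huv hu hv hRuv hcond fun h => hvX (hX₂ h)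
  refine ⟨fun h => (hmin ?_).1 h, fun h => (hmin fun hvX => h.1.1 hvX hv).2 h⟩
  exact h.notMem_of_isolated (Multigraph.notMem_identify_ends huv) fun h => h.2 rfl

/-- Let `u, v` be distinct terminals with `(u, v) ∈ R` such that
`uv ∈ E(G)` or `|N_G(u) ∩ N_G(v)| > k + l`, and let `I'` be the instance obtained from
`I` by identifying `u` and `v`. Then no minimal solution of `I` deletes an edge joining
`u` and `v`, and (under the natural correspondence of the remaining edges) the minimal
solutions of `I` and of `I'` coincide. -/
theorem stmt7 {V E : Type*} [Fintype V] [Fintype E] [DecidableEq V]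
    (G : Multigraph V E) (hG : G.Loopless)
    (T : Set V) (R : V → V → Prop) (hR : IsEquivOn T R) (k l : ℕ)
    (u v : V) (huv : u ≠ v) (hu : u ∈ T) (hv : v ∈ T) (hRuv : R u v)
    (hcond : (∃ e : E, G.ends e = s(u, v)) ∨ k + l < (G.nbhd u ∩ G.nbhd v).ncard) :
    (∀ (X : Set V) (F : Set E), IsMinSolution G T R k l X F →
      ∀ e ∈ F, G.ends e ≠ s(u, v)) ∧
    (∀ (X : Set V) (F' : Set {e : E // G.ends e ≠ s(u, v)}),
      IsMinSolution (G.identify u v) (T \ {v})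
          (fun a b => a ≠ v ∧ b ≠ v ∧ R a b) k l X F' ↔
        IsMinSolution G T R k l X (Subtype.val '' F')) :=
  stmt7_general G T R hR k l u v huv hu hv hRuv hcond
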